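/- arXiv:cs/0605050 — 7 statements merged into one kernel-verified Lean document; each statement's English description precedes it below -/
import Mathlib

section
/- Let G be a transitive nilpotent permutation group on a finite set Ω, p a prime dividing |G|, and α ∈ Ω. Let G_p denote the (unique) p-Sylow subgroup of G. Then the orbit Σ = α^{G_p} is a G-block whose cardinality is the largest power of p dividing |Ω|. -/
/-!
Nilpotency makes the Sylow subgroup `G_p` normal in `G`, so `G` permutes the `G_p`-orbits and
each of them is a block. By orbit–stabilizer, `|α^{G_p}| = |G_p : G_p ∩ G_α|`, and
`G_p ∩ G_α` is a Sylow `p`-subgroup of `G_α` (the only one, since `G_p` is the only Sylow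
`p`-subgroup of `G`); hence `|α^{G_p}|` is the `p`-part of `|G : G_α| = |Ω|`.
-/

open Pointwise

namespace GaloisBlocks

variable {Ω : Type*}

/-- `G ≤ Sym(Ω)` is transitive on `Ω`. -/
def IsTransitive (G : Subgroup (Equiv.Perm Ω)) : Prop :=
  ∀ a b : Ω, ∃ g ∈ G, g a = b

/-- `Δ` is a `G`-block: every `G`-translate of `Δ` equals `Δ` or is disjoint from it. -/
def IsBlock (G : Subgroup (Equiv.Perm Ω)) (Δ : Set Ω) : Prop :=
  ∀ g ∈ G, g • Δ = Δ ∨ Disjoint (g • Δ) Δ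

/-- The setwise stabilizer `G_Δ` of `Δ` in `G`. -/
def stab (G : Subgroup (Equiv.Perm Ω)) (Δ : Set Ω) : Subgroup (Equiv.Perm Ω) :=
  G ⊓ MulAction.stabilizer (Equiv.Perm Ω) Δ

/-- The point stabilizer `G_α`. -/
def stabPt (G : Subgroup (Equiv.Perm Ω)) (α : Ω) : Subgroup (Equiv.Perm Ω) :=
  G ⊓ MulAction.stabilizer (Equiv.Perm Ω) α

/-- The `Δ`-block system of `S`: all `G`-translates of `Δ` contained in `S`. -/
def blockSystem (G : Subgroup (Equiv.Perm Ω)) (S Δ : Set Ω) : Set (Set Ω) :=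
  {Υ | (∃ g ∈ G, Υ = g • Δ) ∧ Υ ⊆ S}

/-- `G(S/Δ)`: elements of `G_S` fixing setwise every block of the `Δ`-block
system of `S`. -/
def blockKer (G : Subgroup (Equiv.Perm Ω)) (S Δ : Set Ω) : Subgroup (Equiv.Perm Ω) :=
  stab G S ⊓ ⨅ Υ ∈ blockSystem G S Δ, MulAction.stabilizer (Equiv.Perm Ω) Υ

/-- `G^Δ = G(Ω/Δ)`: the kernel of the action of `G` on the block system of `Δ`. -/
def fullKer (G : Subgroup (Equiv.Perm Ω)) (Δ : Set Ω) : Subgroup (Equiv.Perm Ω) :=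
  blockKer G Set.univ Δ

/-- The orbit `α^N`. -/
def orbitOf (N : Subgroup (Equiv.Perm Ω)) (α : Ω) : Set Ω :=
  {β | ∃ g ∈ N, g α = β}

/-- `G` is primitive: transitive with only trivial blocks. -/
def IsPrimitive (G : Subgroup (Equiv.Perm Ω)) : Prop :=
  IsTransitive G ∧ ∀ Δ : Set Ω, IsBlock G Δ → Δ.Subsingleton ∨ Δ = Set.univ

/-- `Δ` is a maximal `G`-subblock of `S`. -/
def IsMaximalSubblock (G : Subgroup (Equiv.Perm Ω)) (Δ S : Set Ω) : Prop :=
  IsBlock G Δ ∧ IsBlock G S ∧ Δ ⊂ S ∧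
    ∀ Υ : Set Ω, IsBlock G Υ → ¬(Δ ⊂ Υ ∧ Υ ⊂ S)

/-- `P` is a `p`-Sylow subgroup of `G`. -/
def IsSylowOf (p : ℕ) (P G : Subgroup (Equiv.Perm Ω)) : Prop :=
  P ≤ G ∧ IsPGroup p ↥P ∧
    ∀ Q : Subgroup (Equiv.Perm Ω), Q ≤ G → IsPGroup p ↥Q → P ≤ Q → Q = P

open MulAction

theorem _root_.Sylow.card_inf_of_normal {G : Type*} [Group G] [Finite G] {p : ℕ} [Fact p.Prime]
    (P : Sylow p G) [P.Normal] (H : Subgroup G) :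
    Nat.card ↥((P : Subgroup G) ⊓ H) = p ^ (Nat.card H).factorization p := by
  obtain ⟨Q⟩ := (inferInstance : Nonempty (Sylow p H))
  obtain ⟨R, hR⟩ := Q.exists_comap_subtype_eq
  have : Subsingleton (Sylow p G) := (Sylow.unique_of_normal P ‹_›).instSubsingleton
  rw [Subsingleton.elim R P] at hR
  rw [← Q.card_eq_multiplicity, ← hR, ← Subgroup.subgroupOf_map_subtype,
    Subgroup.card_map_of_injective H.subtype_injective]
  rfl

theorem _root_.Sylow.ncard_orbit_of_normal {G X : Type*} [Group G] [Finite G] [MulAction G X]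
    {p : ℕ} [Fact p.Prime] (P : Sylow p G) [P.Normal] (x : X) :
    (orbit P x).ncard = p ^ (orbit G x).ncard.factorization p := by
  have hP : Nat.card ↥((P : Subgroup G) ⊓ stabilizer G x) * (orbit P x).ncard = Nat.card P := by
    have h := Subgroup.relIndex_inf_mul_relIndex ⊥ (stabilizer G x) P
    rw [bot_inf_eq, Subgroup.relIndex_bot_left, Subgroup.relIndex_bot_left, inf_comm] at h
    rw [← h, Subgroup.relIndex, ← index_stabilizer]
    rfl
  have hG : Nat.card (stabilizer G x) * (orbit G x).ncard = Nat.card G := by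
    rw [← index_stabilizer]; exact Subgroup.card_mul_index _
  have hpos : 0 < p ^ (Nat.card (stabilizer G x)).factorization p :=
    pow_pos (Fact.out : p.Prime).pos _
  rw [P.card_eq_multiplicity, P.card_inf_of_normal, ← hG,
    Nat.factorization_mul Nat.card_pos.ne' ?_, Finsupp.add_apply, pow_add] at hP
  · exact Nat.eq_of_mul_eq_mul_left hpos hP
  · rw [← index_stabilizer]; exact Subgroup.index_ne_zero_of_finite

theorem IsTransitive.isPretransitive {G : Subgroup (Equiv.Perm Ω)} (hG : IsTransitive G) :
    IsPretransitive G Ω where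
  exists_smul_eq a b := by
    obtain ⟨g, hg, rfl⟩ := hG a b
    exact ⟨⟨g, hg⟩, rfl⟩

theorem isBlock_of_mulAction_isBlock {G : Subgroup (Equiv.Perm Ω)} {Δ : Set Ω}
    (hΔ : MulAction.IsBlock G Δ) : IsBlock G Δ :=
  fun g hg ↦ hΔ.smul_eq_or_disjoint ⟨g, hg⟩

theorem orbitOf_eq_orbit_subgroupOf {P G : Subgroup (Equiv.Perm Ω)} (hPG : P ≤ G) (α : Ω) :
    orbitOf P α = orbit (P.subgroupOf G) α := by
  ext β
  constructor
  · rintro ⟨g, hg, rfl⟩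
    exact ⟨⟨⟨g, hPG hg⟩, hg⟩, rfl⟩
  · rintro ⟨⟨⟨g, -⟩, hg⟩, rfl⟩
    exact ⟨g, hg, rfl⟩

def IsSylowOf.toSylow {p : ℕ} {P G : Subgroup (Equiv.Perm Ω)} (hP : IsSylowOf p P G) :
    Sylow p G where
  toSubgroup := P.subgroupOf G
  isPGroup' := hP.2.1.comap_of_injective G.subtype G.subtype_injective
  is_maximal' {Q} hQ hle := by
    have hmap : Q.map G.subtype = P := by
      refine hP.2.2 _ (Subgroup.map_subtype_le Q) (hQ.map G.subtype) ?_
      calc P = (P.subgroupOf G).map G.subtype := by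
            rw [Subgroup.subgroupOf_map_subtype, inf_of_le_left hP.1]
        _ ≤ Q.map G.subtype := Subgroup.map_mono hle
    rw [← hmap]
    exact (Subgroup.comap_map_eq_self_of_injective G.subtype_injective Q).symm

theorem stmt5_general [Fintype Ω] (G P : Subgroup (Equiv.Perm Ω)) (hG : IsTransitive G)
    (hnil : Group.IsNilpotent ↥G) (p : ℕ) (hp : p.Prime)
    (hP : IsSylowOf p P G) (α : Ω) :
    IsBlock G (orbitOf P α) ∧
    (orbitOf P α).ncard = p ^ ((Fintype.card Ω).factorization p) := by
  have : Fact p.Prime := ⟨hp⟩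
  have := hG.isPretransitive
  let S := hP.toSylow
  rw [orbitOf_eq_orbit_subgroupOf hP.1]
  refine ⟨isBlock_of_mulAction_isBlock (.orbit_of_normal (N := (S : Subgroup G)) α),
    (S.ncard_orbit_of_normal α).trans ?_⟩
  rw [orbit_eq_univ, Set.ncard_univ, Nat.card_eq_fintype_card]

/-- The orbit of `α` under the `p`-Sylow subgroup of a transitive nilpotent
group is a block whose size is the largest power of `p` dividing `#Ω`. -/
theorem stmt5 [Fintype Ω] (G P : Subgroup (Equiv.Perm Ω)) (hG : IsTransitive G)
    (hnil : Group.IsNilpotent ↥G) (p : ℕ) (hp : p.Prime)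
    (hpG : p ∣ Nat.card ↥G) (hP : IsSylowOf p P G) (α : Ω) :
    IsBlock G (orbitOf P α) ∧
    (orbitOf P α).ncard = p ^ ((Fintype.card Ω).factorization p) :=
  stmt5_general G P hG hnil p hp hP α

end GaloisBlocks
end

section
/- Let G be a transitive permutation group on a finite set Ω, α ∈ Ω, and p a prime dividing |G|. Suppose there is a chain of G-blocks {α} = Δ_0 ⊂ Δ_1 ⊂ ... ⊂ Δ_m with [Δ_{i+1} : Δ_i] = p and G_{Δ_i} normal in G_{Δ_{i+1}} for each i, and such that p does not divide [G : G^{Δ_m}], where G^{Δ} = G(Ω/Δ) is the kernel of the G-action on the block system of Δ. Then G^{Δ_m} is a normal p-Sylow subgroup of G. -/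
open Pointwise

namespace GaloisBlocks

variable {Ω : Type*}

lemma mem_stab_iff {G : Subgroup (Equiv.Perm Ω)} {S : Set Ω} {g : Equiv.Perm Ω} :
    g ∈ stab G S ↔ g ∈ G ∧ g • S = S := by
  simp [stab, Subgroup.mem_inf, MulAction.mem_stabilizer_iff]

lemma ncard_sUnion_eq {α : Type*} [Finite α] {c : ℕ} (T : Set (Set α)) :
    T.PairwiseDisjoint id → (∀ s ∈ T, s.ncard = c) → (⋃₀ T).ncard = T.ncard * c := by
  refine Set.Finite.induction_on T (Set.toFinite T) (by simp) ?_
  intro s T' hsT' hT' ih hdisj hc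
  have hd : Disjoint s (⋃₀ T') := by
    rw [Set.disjoint_sUnion_right]
    intro t ht
    exact hdisj (Set.mem_insert _ _) (Set.mem_insert_of_mem _ ht)
      (by rintro rfl; exact hsT' ht)
  rw [Set.sUnion_insert, Set.ncard_union_eq hd (Set.toFinite _) (Set.toFinite _),
    ih (hdisj.subset (Set.subset_insert _ _)) (fun t ht => hc t (Set.mem_insert_of_mem _ ht)),
    Set.ncard_insert_of_notMem hsT' (Set.toFinite _), hc s (Set.mem_insert _ _)]
  ring

/-- If a translate of a subset of a block meets the block, the translating element
stabilizes the block. -/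
lemma mem_stab_of_inter {G : Subgroup (Equiv.Perm Ω)} {S D : Set Ω} (hS : IsBlock G S)
    (hDS : D ⊆ S) {g : Equiv.Perm Ω} (hg : g ∈ G) (h : ((g • D) ∩ S).Nonempty) :
    g ∈ stab G S := by
  rcases hS g hg with he | hd
  · exact mem_stab_iff.mpr ⟨hg, he⟩
  · exfalso
    obtain ⟨x, hx1, hx2⟩ := h
    exact Set.disjoint_left.mp hd (Set.smul_set_mono hDS hx1) hx2

lemma mem_of_coprime_orderOf {Γ : Type*} [Group Γ] {K : Subgroup Γ} [K.Normal] {x : Γ}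
    (h : Nat.Coprime (orderOf x) K.index) : x ∈ K := by
  have h1 : orderOf ((x : Γ ⧸ K)) ∣ orderOf x := orderOf_map_dvd (QuotientGroup.mk' K) x
  have h2 : orderOf ((x : Γ ⧸ K)) ∣ K.index := orderOf_dvd_natCard _
  have : orderOf ((x : Γ ⧸ K)) = 1 := Nat.dvd_one.mp (h ▸ Nat.dvd_gcd h1 h2)
  exact (QuotientGroup.eq_one_iff x).mp (orderOf_eq_one_iff.mp this)

/-- Orbit–stabilizer counting: the relative index of the stabilizer of a subblock. -/
lemma relindex_stab_eq {G : Subgroup (Equiv.Perm Ω)} [Finite Ω] (hG : IsTransitive G)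
    {D S : Set Ω} {α : Ω} (hD : IsBlock G D) (hS : IsBlock G S) (hDS : D ⊆ S) (hα : α ∈ D)
    {p : ℕ} (hcard : S.ncard = p * D.ncard) :
    (stab G D).relIndex (stab G S) = p := by
  set H := stab G S with hH
  have hstabEq : MulAction.stabilizer (↥H) D = (stab G D).subgroupOf H := by
    ext ⟨h, hh⟩
    simp only [MulAction.mem_stabilizer_iff, Subgroup.mem_subgroupOf, Subgroup.smul_def]
    rw [mem_stab_iff]
    exact ⟨fun he => ⟨(mem_stab_iff.mp hh).1, he⟩, fun he => he.2⟩
  have : (stab G D).relIndex H = (MulAction.stabilizer (↥H) D).index := by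
    rw [hstabEq]; rfl
  rw [this, MulAction.index_stabilizer]
  set T : Set (Set Ω) := {Υ | (∃ g ∈ G, Υ = g • D) ∧ Υ ⊆ S} with hT
  have horb : MulAction.orbit (↥H) D = T := by
    ext Υ
    constructor
    · rintro ⟨⟨h, hh⟩, rfl⟩
      obtain ⟨hhG, hhS⟩ := mem_stab_iff.mp hh
      refine ⟨⟨h, hhG, rfl⟩, ?_⟩
      calc (⟨h, hh⟩ : ↥H) • D = h • D := Subgroup.smul_def _ _
        _ ⊆ h • S := Set.smul_set_mono hDS
        _ = S := hhS
    · rintro ⟨⟨g, hgG, rfl⟩, hsub⟩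
      have hne : ((g • D) ∩ S).Nonempty :=
        ⟨g • α, Set.smul_mem_smul_set hα, hsub (Set.smul_mem_smul_set hα)⟩
      have hgH : g ∈ H := mem_stab_of_inter hS hDS hgG hne
      exact ⟨⟨g, hgH⟩, rfl⟩
  rw [horb]
  -- now count T
  have hdisj : T.PairwiseDisjoint id := by
    rintro Υ₁ ⟨⟨g₁, hg₁, rfl⟩, -⟩ Υ₂ ⟨⟨g₂, hg₂, rfl⟩, -⟩ hne
    show Disjoint (g₁ • D) (g₂ • D)
    rcases hD (g₂⁻¹ * g₁) (mul_mem (inv_mem hg₂) hg₁) with he | hd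
    · exfalso
      apply hne
      have := congrArg (g₂ • ·) he
      simpa [smul_smul, mul_assoc] using this
    · rw [Set.disjoint_left]
      intro x hx1 hx2
      have h1 : g₂⁻¹ • x ∈ (g₂⁻¹ * g₁) • D := by
        rw [mul_smul]; exact Set.smul_mem_smul_set hx1
      have h2 : g₂⁻¹ • x ∈ D := by
        obtain ⟨d, hd2, rfl⟩ := hx2
        simpa [smul_smul] using hd2
      exact Set.disjoint_left.mp hd h1 h2
  have hcover : ⋃₀ T = S := by
    apply Set.Subset.antisymm
    · rintro x ⟨Υ, ⟨-, hsub⟩, hx⟩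
      exact hsub hx
    · intro β hβ
      obtain ⟨g, hgG, hgα⟩ := hG α β
      have hβm : β ∈ g • D := ⟨α, hα, hgα⟩
      have hne : ((g • D) ∩ S).Nonempty := ⟨β, hβm, hβ⟩
      have hgH := mem_stab_of_inter hS hDS hgG hne
      have hsub : g • D ⊆ S := by
        rw [← (mem_stab_iff.mp hgH).2]
        exact Set.smul_set_mono hDS
      exact ⟨g • D, ⟨⟨g, hgG, rfl⟩, hsub⟩, hβm⟩
  have hsize : ∀ Υ ∈ T, Υ.ncard = D.ncard := by
    rintro Υ ⟨⟨g, -, rfl⟩, -⟩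
    have : g • D = (⇑g) '' D := rfl
    rw [this, Set.ncard_image_of_injective _ g.injective]
  have hcount : S.ncard = T.ncard * D.ncard := by
    rw [← hcover]; exact ncard_sUnion_eq T hdisj hsize
  have hDpos : 0 < D.ncard := by
    rw [Set.ncard_pos (Set.toFinite D)]
    exact ⟨α, hα⟩
  have : p * D.ncard = T.ncard * D.ncard := by rw [← hcard, hcount]
  exact (Nat.eq_of_mul_eq_mul_right hDpos this).symm

lemma mem_fullKer_iff {G : Subgroup (Equiv.Perm Ω)} {D : Set Ω} {x : Equiv.Perm Ω} :
    x ∈ fullKer G D ↔ x ∈ G ∧ ∀ g ∈ G, x • (g • D) = g • D := by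
  simp only [fullKer, blockKer, Subgroup.mem_inf, Subgroup.mem_iInf,
    MulAction.mem_stabilizer_iff, blockSystem, Set.mem_setOf_eq]
  constructor
  · rintro ⟨hx, hall⟩
    refine ⟨(mem_stab_iff.mp hx).1, fun g hg => hall (g • D) ⟨⟨g, hg, rfl⟩, Set.subset_univ _⟩⟩
  · rintro ⟨hxG, hall⟩
    refine ⟨mem_stab_iff.mpr ⟨hxG, by simp⟩, ?_⟩
    rintro Υ ⟨⟨g, hg, rfl⟩, -⟩
    exact hall g hg

/-- If there is a chain of blocks `{α} = Δ_0 ⊂ … ⊂ Δ_m` with successive indices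
`p` and normal successive stabilizers, and `p ∤ [G : G^{Δ_m}]`, then `G^{Δ_m}`
is a normal `p`-Sylow subgroup of `G`. -/
theorem stmt10 [Fintype Ω] (G : Subgroup (Equiv.Perm Ω)) (hG : IsTransitive G)
    (p : ℕ) (hp : p.Prime) (hpG : p ∣ Nat.card ↥G) (α : Ω) (m : ℕ)
    (Δ : Fin (m + 1) → Set Ω) (h0 : Δ 0 = {α})
    (hblock : ∀ i, IsBlock G (Δ i))
    (hsub : ∀ i : Fin m, Δ i.castSucc ⊂ Δ i.succ)
    (hindex : ∀ i : Fin m, (Δ i.succ).ncard = p * (Δ i.castSucc).ncard)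
    (hnormal : ∀ i : Fin m,
      ((stab G (Δ i.castSucc)).subgroupOf (stab G (Δ i.succ))).Normal)
    (hrel : ¬ p ∣ (fullKer G (Δ (Fin.last m))).relIndex G) :
    IsSylowOf p (fullKer G (Δ (Fin.last m))) G ∧
    ((fullKer G (Δ (Fin.last m))).subgroupOf G).Normal := by
  classical
  set Dm := Δ (Fin.last m) with hDm
  set N := fullKer G Dm with hN
  have hα : ∀ i : Fin (m + 1), α ∈ Δ i := by
    intro i
    induction i using Fin.induction with
    | zero => rw [h0]; exact Set.mem_singleton α
    | succ i ih => exact (hsub i).1 ih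
  have hNG : N ≤ G := fun x hx => (mem_fullKer_iff.mp hx).1
  have hNconj : ∀ g ∈ G, ∀ x ∈ N, g * x * g⁻¹ ∈ N := by
    intro g hg x hx
    obtain ⟨hxG, hfix⟩ := mem_fullKer_iff.mp hx
    refine mem_fullKer_iff.mpr ⟨mul_mem (mul_mem hg hxG) (inv_mem hg), ?_⟩
    intro h hh
    have hkey := hfix (g⁻¹ * h) (mul_mem (inv_mem hg) hh)
    calc (g * x * g⁻¹) • h • Dm = g • (x • ((g⁻¹ * h) • Dm)) := by
          simp [smul_smul, mul_assoc]
      _ = g • ((g⁻¹ * h) • Dm) := by rw [hkey]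
      _ = h • Dm := by simp [smul_smul, mul_assoc]
  -- every element of N of order coprime to p is trivial
  have hstabAll : ∀ y ∈ N, Nat.Coprime (orderOf y) p → ∀ i : Fin (m + 1), y ∈ stab G (Δ i) := by
    intro y hy hycop
    have hylast : y ∈ stab G Dm := by
      rw [mem_stab_iff]
      exact ⟨hNG hy, by simpa using (mem_fullKer_iff.mp hy).2 1 (one_mem G)⟩
    intro i
    induction i using Fin.reverseInduction with
    | last => exact hylast
    | cast i ih =>
      haveI := hnormal i
      have hidx : ((stab G (Δ i.castSucc)).subgroupOf (stab G (Δ i.succ))).index = p :=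
        relindex_stab_eq hG (hblock i.castSucc) (hblock i.succ) (hsub i).1
          (hα i.castSucc) (hindex i)
      have hmem : (⟨y, ih⟩ : ↥(stab G (Δ i.succ))) ∈
          (stab G (Δ i.castSucc)).subgroupOf (stab G (Δ i.succ)) := by
        apply mem_of_coprime_orderOf
        rw [hidx, Subgroup.orderOf_mk]
        exact hycop
      exact Subgroup.mem_subgroupOf.mp hmem
  have hkey : ∀ x ∈ N, Nat.Coprime (orderOf x) p → x = 1 := by
    intro x hx hcop
    have hfixα : ∀ y ∈ N, Nat.Coprime (orderOf y) p → y α = α := by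
      intro y hy hycop
      have h1 := hstabAll y hy hycop 0
      rw [h0, mem_stab_iff] at h1
      have h2 := h1.2
      rw [Set.smul_set_singleton] at h2
      simpa using h2
    ext β
    obtain ⟨g, hg, rfl⟩ := hG α β
    have hyN : g⁻¹ * x * g ∈ N := by
      have := hNconj g⁻¹ (inv_mem hg) x hx
      simpa using this
    have hord : orderOf (g⁻¹ * x * g) = orderOf x := by
      have : g⁻¹ * x * g = (MulAut.conj g⁻¹) x := by
        simp [MulAut.conj_apply]
      rw [this, MulEquiv.orderOf_eq]
    have hfix := hfixα _ hyN (by rw [hord]; exact hcop)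
    have : g⁻¹ (x (g α)) = α := by
      simpa [Equiv.Perm.mul_apply] using hfix
    have := congrArg g this
    simpa using this
  -- N is a p-group
  have hPG : IsPGroup p ↥N := by
    rintro ⟨x, hx⟩
    have hn : orderOf x ≠ 0 := (orderOf_pos x).ne'
    refine ⟨(orderOf x).factorization p, ?_⟩
    have hdvd : p ^ (orderOf x).factorization p ∣ orderOf x := Nat.ordProj_dvd (orderOf x) p
    have hyN : x ^ p ^ (orderOf x).factorization p ∈ N := pow_mem hx _
    have hordy : orderOf (x ^ p ^ (orderOf x).factorization p)
        = orderOf x / p ^ (orderOf x).factorization p := by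
      rw [orderOf_pow, Nat.gcd_eq_right hdvd]
    have hcop : Nat.Coprime (orderOf (x ^ p ^ (orderOf x).factorization p)) p := by
      rw [hordy]
      exact (Nat.coprime_ordCompl hp hn).symm
    have h1 := hkey _ hyN hcop
    exact Subtype.ext (by rw [SubmonoidClass.coe_pow]; simpa using h1)
  refine ⟨⟨hNG, hPG, ?_⟩, ?_⟩
  · intro Q hQG hQp hNQ
    haveI : Fact p.Prime := ⟨hp⟩
    obtain ⟨k, hk⟩ := hQp.index (N.subgroupOf Q)
    have hdvd : N.relIndex Q ∣ N.relIndex G :=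
      ⟨Q.relIndex G, (Subgroup.relIndex_mul_relIndex N Q G hNQ hQG).symm⟩
    have hnp : ¬ p ∣ N.relIndex Q := fun hdp => hrel (hdp.trans hdvd)
    have hrq : N.relIndex Q = p ^ k := hk
    have hk0 : k = 0 := by
      by_contra hk0
      exact hnp (hrq ▸ dvd_pow_self p hk0)
    have h1 : N.relIndex Q = 1 := by rw [hrq, hk0, pow_zero]
    exact le_antisymm (Subgroup.relIndex_eq_one.mp h1) hNQ
  · constructor
    intro n hn g
    rw [Subgroup.mem_subgroupOf] at hn ⊢
    have := hNconj g g.2 n hn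
    simpa using this


end GaloisBlocks
end

section
/- Let G = H × K be a transitive permutation group on a finite set Ω where H is a p-group and K has order coprime to p, let α ∈ Ω, and let Σ = α^H be the H-orbit of α. Then a subset Δ ⊆ Σ containing α is a G-block if and only if it is an H-block for the transitive action of H on Σ. -/
/-!
Write `g ∈ G` as `g = hk` with `h ∈ H`, `k ∈ K`. If `g • Δ` meets `Δ ⊆ Σ`, then `k α = h' α`
for some `h' ∈ H`, so `h'⁻¹k` fixes `α`; its `p^n`-th power is `k^{p^n}`, and since `p ∤ |k|`,
`k` is a power of `k^{p^n}` and fixes `α` too. Commuting with `H`, `k` then fixes `Σ = α^H`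
pointwise, so `g • Δ = h • Δ` and the `H`-block property of `Δ` applies.
-/

open Pointwise

namespace GaloisBlocks

variable {Ω : Type*}

theorem smul_eq_self_of_commute_of_smul_eq {M X : Type*} [Group M] [MulAction M X] {h k : M}
    {n : ℕ} (hhk : Commute h k) (hn : h ^ n = 1) (hcop : n.Coprime (orderOf k)) {a : X}
    (ha : k • a = h • a) : k • a = a := by
  have hstab : h⁻¹ * k ∈ MulAction.stabilizer M a := by
    rw [MulAction.mem_stabilizer_iff, mul_smul, ha, inv_smul_smul]
  have hpow : (h⁻¹ * k) ^ n = k ^ n := by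
    rw [hhk.inv_left.mul_pow, inv_pow, hn, inv_one, one_mul]
  obtain ⟨m, hm⟩ := exists_pow_eq_self_of_coprime hcop
  suffices k ∈ MulAction.stabilizer M a from this
  rw [← hm, ← hpow]
  exact pow_mem (pow_mem hstab n) m

theorem exists_mul_eq_of_mem_sup_of_commute {G : Type*} [Group G] {H K : Subgroup G}
    (hcomm : ∀ h ∈ H, ∀ k ∈ K, Commute h k) {g : G} (hg : g ∈ H ⊔ K) :
    ∃ h ∈ H, ∃ k ∈ K, g = h * k := by
  rw [Subgroup.sup_eq_closure] at hg
  induction hg using Subgroup.closure_induction with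
  | mem x hx =>
    rcases hx with hx | hx
    · exact ⟨x, hx, 1, one_mem K, (mul_one x).symm⟩
    · exact ⟨1, one_mem H, x, hx, (one_mul x).symm⟩
  | one => exact ⟨1, one_mem H, 1, one_mem K, (one_mul 1).symm⟩
  | mul x y _ _ ihx ihy =>
    obtain ⟨h₁, hh₁, k₁, hk₁, rfl⟩ := ihx
    obtain ⟨h₂, hh₂, k₂, hk₂, rfl⟩ := ihy
    refine ⟨h₁ * h₂, mul_mem hh₁ hh₂, k₁ * k₂, mul_mem hk₁ hk₂, ?_⟩
    rw [mul_assoc, mul_assoc, ← mul_assoc k₁, (hcomm h₂ hh₂ k₁ hk₁).symm.eq, mul_assoc]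
  | inv x _ ihx =>
    obtain ⟨h, hh, k, hk, rfl⟩ := ihx
    exact ⟨h⁻¹, inv_mem hh, k⁻¹, inv_mem hk, by rw [mul_inv_rev, (hcomm h hh k hk).inv_inv.eq]⟩

section orbitOf

variable {H : Subgroup (Equiv.Perm Ω)} {α : Ω}

theorem apply_mem_orbitOf {h : Equiv.Perm Ω} (hh : h ∈ H) {β : Ω} (hβ : β ∈ orbitOf H α) :
    h β ∈ orbitOf H α := by
  obtain ⟨h₁, hh₁, rfl⟩ := hβ
  exact ⟨h * h₁, mul_mem hh hh₁, rfl⟩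

variable {k : Equiv.Perm Ω} (hk : ∀ h ∈ H, Commute h k)
include hk

theorem apply_mem_orbitOf_of_commute {β : Ω} (hβ : β ∈ orbitOf H α)
    (hkβ : k β ∈ orbitOf H α) : k α ∈ orbitOf H α := by
  obtain ⟨h, hh, rfl⟩ := hβ
  have hkh : k (h α) = h (k α) := congrArg (· α) (hk h hh).eq.symm
  simpa [hkh] using apply_mem_orbitOf (inv_mem hh) hkβ

theorem eqOn_orbitOf_of_apply_eq (hkα : k α = α) : Set.EqOn k id (orbitOf H α) := by
  rintro _ ⟨h, hh, rfl⟩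
  change k (h α) = h α
  rw [← Equiv.Perm.mul_apply, ← (hk h hh).eq, Equiv.Perm.mul_apply, hkα]

theorem eqOn_orbitOf_of_isPGroup {p : ℕ} (hp : p.Prime) (hHp : IsPGroup p H)
    (hpk : ¬ p ∣ orderOf k) (hkα : k α ∈ orbitOf H α) : Set.EqOn k id (orbitOf H α) := by
  obtain ⟨h, hh, hhα⟩ := hkα
  obtain ⟨n, hn⟩ := hHp ⟨h, hh⟩
  refine eqOn_orbitOf_of_apply_eq hk (smul_eq_self_of_commute_of_smul_eq (hk h hh)
    (n := p ^ n) (by simpa using congrArg Subtype.val hn) ?_ hhα.symm)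
  exact ((hp.coprime_iff_not_dvd).mpr hpk).pow_left n

end orbitOf

theorem stmt12_general (G H K : Subgroup (Equiv.Perm Ω)) (p : ℕ)
    (hp : p.Prime) (hHG : H ≤ G)
    (hcomm : ∀ h ∈ H, ∀ k ∈ K, Commute h k)
    (hsup : H ⊔ K = G) (hHp : IsPGroup p ↥H) (hK : ¬ p ∣ Nat.card ↥K)
    (α : Ω) (Δ : Set Ω) (hΔsub : Δ ⊆ orbitOf H α) :
    IsBlock G Δ ↔ IsBlock H Δ := by
  refine ⟨fun hB h hh => hB h (hHG hh), fun hB g hg => ?_⟩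
  obtain ⟨h, hh, k, hk, rfl⟩ := exists_mul_eq_of_mem_sup_of_commute hcomm (hsup ▸ hg)
  by_cases hdisj : Disjoint ((h * k) • Δ) Δ
  · exact Or.inr hdisj
  obtain ⟨_, ⟨δ, hδ, rfl⟩, hhkδ⟩ := Set.not_disjoint_iff.mp hdisj
  have hkδ : k δ ∈ orbitOf H α := by
    simpa using apply_mem_orbitOf (inv_mem hh) (hΔsub hhkδ)
  have hkH : ∀ h' ∈ H, Commute h' k := fun h' hh' => hcomm h' hh' k hk
  have hkfix := eqOn_orbitOf_of_isPGroup hkH hp hHp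
    (fun hpk => hK (hpk.trans (K.orderOf_dvd_natCard hk)))
    (apply_mem_orbitOf_of_commute hkH (hΔsub hδ) hkδ)
  have hkΔ : k • Δ = Δ := (hkfix.mono hΔsub).image_eq_self
  rw [mul_smul, hkΔ]
  exact hB h hh

/-- If `G = H × K` (internally) with `H` a `p`-group and `p ∤ #K`, and
`Σ = α^H`, then a subset `Δ ⊆ Σ` containing `α` is a `G`-block iff it is an
`H`-block. -/
theorem stmt12 [Fintype Ω] (G H K : Subgroup (Equiv.Perm Ω)) (p : ℕ)
    (hp : p.Prime) (hG : IsTransitive G) (hHG : H ≤ G) (hKG : K ≤ G)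
    (hcomm : ∀ h ∈ H, ∀ k ∈ K, Commute h k) (hinf : H ⊓ K = ⊥)
    (hsup : H ⊔ K = G) (hHp : IsPGroup p ↥H) (hK : ¬ p ∣ Nat.card ↥K)
    (α : Ω) (Δ : Set Ω) (hΔsub : Δ ⊆ orbitOf H α) (hα : α ∈ Δ) :
    IsBlock G Δ ↔ IsBlock H Δ :=
  stmt12_general G H K p hp hHG hcomm hsup hHp hK α Δ hΔsub

end GaloisBlocks
end

section
/- Let G be a transitive nilpotent permutation group on a finite set Ω, p a prime dividing |G|, and Δ a G-block with |Δ| = p^l where p^l is strictly less than the largest power p^m of p dividing |Ω|. Then there exists a G-block Σ such that Δ is a maximal G-subblock of Σ and [Σ : Δ] = p. -/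
open Pointwise

namespace GaloisBlocks

variable {Ω : Type*}

section AuxiliaryGroupTheory

variable {Γ : Type*} [Group Γ]

lemma cardRel [Finite Γ] (H K : Subgroup Γ) (h : H ≤ K) :
    Nat.card K = H.relIndex K * Nat.card H := by
  have h1 := Subgroup.card_eq_card_quotient_mul_card_subgroup (H.subgroupOf K)
  rw [h1, Subgroup.relIndex, Subgroup.index_eq_card]
  congr 1
  exact Nat.card_congr (Subgroup.subgroupOfEquivOfLe h).toEquiv

lemma cardMap {Γ' : Type*} [Group Γ'] (f : Γ →* Γ') (hf : Function.Injective f)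
    (S : Subgroup Γ) : Nat.card (S.map f) = Nat.card S :=
  (Nat.card_congr (S.equivMapOfInjective f hf).toEquiv).symm

lemma lemmaP [Finite Γ] {p : ℕ} [Fact p.Prime] (hΓ : IsPGroup p Γ)
    (R : Subgroup Γ) (hR : R ≠ ⊤) :
    ∃ A : Subgroup Γ, R ≤ A ∧ A ≤ Subgroup.normalizer (R : Set Γ) ∧ Nat.card A = p * Nat.card R := by
  have hnil : Group.IsNilpotent Γ := hΓ.isNilpotent
  have hnc : NormalizerCondition Γ := normalizerCondition_of_isNilpotent
  have hlt : R < Subgroup.normalizer (R : Set Γ) := hnc R (lt_top_iff_ne_top.mpr hR)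
  set T := Subgroup.normalizer (R : Set Γ) with hT
  set R' : Subgroup T := R.subgroupOf T with hR'
  haveI : (R.subgroupOf T).Normal := Subgroup.normal_in_normalizer
  -- quotient is a nontrivial p-group
  have hq : IsPGroup p (T ⧸ R') := ((hΓ.to_subgroup T).to_quotient R')
  have hcardR' : Nat.card R' = Nat.card R :=
    Nat.card_congr (Subgroup.subgroupOfEquivOfLe Subgroup.le_normalizer).toEquiv
  have hRpos : 0 < Nat.card R := Nat.card_pos
  have hTR : Nat.card T = Nat.card (T ⧸ R') * Nat.card R := by
    rw [← hcardR']; exact Subgroup.card_eq_card_quotient_mul_card_subgroup R'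
  have hlt' : Nat.card R < Nat.card T := by
    by_contra hle
    exact hlt.ne (Subgroup.eq_of_le_of_card_ge hlt.le (le_of_not_gt hle))
  have hQ1 : 1 < Nat.card (T ⧸ R') := by
    rcases Nat.lt_or_ge 1 (Nat.card (T ⧸ R')) with h | h
    · exact h
    · interval_cases h' : Nat.card (T ⧸ R') <;> omega
  have hpQ : p ∣ Nat.card (T ⧸ R') := by
    rcases hq.card_eq_or_dvd with h | h
    · omega
    · exact h
  obtain ⟨z, hz⟩ := exists_prime_orderOf_dvd_card' p hpQ
  set A' : Subgroup T := (Subgroup.zpowers z).comap (QuotientGroup.mk' R') with hA'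
  have hRA' : R' ≤ A' := by
    intro x hx
    simp only [hA', Subgroup.mem_comap]
    have : (QuotientGroup.mk' R') x = 1 := by
      rw [← QuotientGroup.ker_mk' R'] at hx
      exact hx
    rw [this]; exact Subgroup.one_mem _
  have hA'card : Nat.card A' = p * Nat.card R := by
    have hidx : A'.index = (Subgroup.zpowers z).index :=
      Subgroup.index_comap_of_surjective _ (QuotientGroup.mk'_surjective R')
    have h1 : Nat.card A' * A'.index = Nat.card T := Subgroup.card_mul_index A'
    have h2 : Nat.card (Subgroup.zpowers z) * (Subgroup.zpowers z).index
        = Nat.card (T ⧸ R') := Subgroup.card_mul_index _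
    have h3 : Nat.card (Subgroup.zpowers z) = p := by
      rw [Nat.card_zpowers, hz]
    have hpos : 0 < (Subgroup.zpowers z).index := Nat.pos_of_ne_zero (by
      intro h0; rw [h0, mul_zero] at h2
      exact absurd h2.symm (by positivity))
    have := hTR
    rw [← h2, h3] at this
    rw [hidx] at h1
    -- card A' * idx = p * idx * card R
    have : Nat.card A' * (Subgroup.zpowers z).index
        = p * Nat.card R * (Subgroup.zpowers z).index := by
      rw [h1, this]; ring
    exact Nat.eq_of_mul_eq_mul_right hpos this
  refine ⟨A'.map T.subtype, ?_, ?_, ?_⟩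
  · have : R = R'.map T.subtype := by
      rw [hR', Subgroup.subgroupOf_map_subtype, inf_of_le_left Subgroup.le_normalizer]
    rw [this]
    exact Subgroup.map_mono hRA'
  · exact Subgroup.map_subtype_le A'
  · rw [← hA'card]
    exact (Nat.card_congr (A'.equivMapOfInjective T.subtype T.subtype_injective).toEquiv).symm

lemma lemmaConj [Finite Γ] {p : ℕ} [Fact p.Prime]
    (hn : ∀ (q : ℕ) (_ : Fact q.Prime) (Q : Sylow q Γ), (Q : Subgroup Γ).Normal)
    (P : Sylow p Γ) (H : Subgroup Γ) {a : Γ} (ha : a ∈ (P : Subgroup Γ))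
    (haN : ∀ x ∈ (P : Subgroup Γ) ⊓ H, a * x * a⁻¹ ∈ (P : Subgroup Γ) ⊓ H) :
    ∀ h ∈ H, a * h * a⁻¹ ∈ H := by
  have primepow : ∀ (q : ℕ) (_ : Fact q.Prime) (j : ℕ) (x : Γ), x ∈ H →
      orderOf x = q ^ j → a * x * a⁻¹ ∈ H := by
    intro q hq j x hx hord
    have hxq : IsPGroup q (Subgroup.zpowers x) := by
      apply IsPGroup.of_card
      rw [Nat.card_zpowers, hord]
    obtain ⟨Q, hQ⟩ := hxq.exists_le_sylow
    have hxQ : x ∈ (Q : Subgroup Γ) := hQ (Subgroup.mem_zpowers x)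
    by_cases hqp : q = p
    · subst hqp
      haveI := Sylow.unique_of_normal P (hn q ‹_› P)
      have : Q = P := Subsingleton.elim Q P
      subst this
      exact (haN x ⟨hxQ, hx⟩).2
    · have hcomm : Commute a x := by
        apply Subgroup.commute_of_normal_of_disjoint (P : Subgroup Γ) (Q : Subgroup Γ)
          (hn p ‹_› P) (hn q ‹_› Q) ?_ a x ha hxQ
        exact IsPGroup.disjoint_of_ne p q (Ne.symm hqp) _ _ P.isPGroup' Q.isPGroup'
      rw [hcomm.eq, mul_assoc, mul_inv_cancel, mul_one]
      exact hx
  have main : ∀ n : ℕ, ∀ h ∈ H, orderOf h = n → a * h * a⁻¹ ∈ H := by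
    intro n
    induction n using Nat.strong_induction_on with
    | _ n ih =>
    intro h hh hn'
    have hpos : 0 < n := hn' ▸ (orderOf_pos h)
    rcases eq_or_lt_of_le (show 1 ≤ n from hpos) with h1 | h1
    · have : h = 1 := orderOf_eq_one_iff.mp (hn' ▸ h1.symm)
      subst this; simpa using H.one_mem
    set q := n.minFac with hq
    haveI hqp : Fact q.Prime := ⟨Nat.minFac_prime (by omega)⟩
    set j := n.factorization q with hj
    set b := q ^ j with hb
    set c := n / b with hc
    have hbdvd : b ∣ n := Nat.ordProj_dvd n q
    have hbc : b * c = n := Nat.mul_div_cancel' hbdvd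
    have hcop : Nat.Coprime b c := by
      apply Nat.Coprime.pow_left
      exact Nat.coprime_ordCompl hqp.out (by omega)
    have hb1 : 1 < b := by
      have hj0 : 0 < j := hqp.out.factorization_pos_of_dvd (by omega) (Nat.minFac_dvd n)
      exact Nat.one_lt_pow hj0.ne' hqp.out.one_lt
    by_cases hc1 : c = 1
    · have hn'' : n = q ^ j := by rw [← hbc, hc1, mul_one]
      exact primepow q ‹_› j h hh (hn'.trans hn'')
    have hc0 : 0 < c := Nat.pos_of_ne_zero (by intro h0; rw [h0, mul_zero] at hbc; omega)
    have hcn : c < n := Nat.div_lt_self (by omega) hb1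
    have hbn : b < n := by
      rcases lt_or_eq_of_le (Nat.le_of_dvd (by omega) hbdvd) with hlt | heq
      · exact hlt
      · exact absurd (by rw [hc, heq, Nat.div_self (by omega)]) hc1
    have hicop : IsCoprime (b : ℤ) (c : ℤ) := by
      rw [Int.isCoprime_iff_gcd_eq_one]
      exact_mod_cast hcop
    obtain ⟨u, v, huv⟩ := hicop
    set y := h ^ ((b : ℤ) * u) with hy
    set z := h ^ ((c : ℤ) * v) with hz
    have hyz : h = y * z := by
      rw [hy, hz, ← zpow_add, show ((b : ℤ) * u + (c : ℤ) * v = 1) by linarith [huv],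
        zpow_one]
    have hyH : y ∈ H := H.zpow_mem hh _
    have hzH : z ∈ H := H.zpow_mem hh _
    have horder : h ^ (n : ℤ) = 1 := by
      rw [zpow_natCast, ← hn', pow_orderOf_eq_one]
    have hyc : y ^ c = 1 := by
      rw [hy, ← zpow_natCast (h ^ ((b : ℤ) * u)) c, ← zpow_mul,
        show ((b : ℤ) * u * (c : ℕ) = (n : ℤ) * u) by push_cast [← hbc]; ring,
        zpow_mul, horder, one_zpow]
    have hzb : z ^ b = 1 := by
      rw [hz, ← zpow_natCast (h ^ ((c : ℤ) * v)) b, ← zpow_mul,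
        show ((c : ℤ) * v * (b : ℕ) = (n : ℤ) * v) by push_cast [← hbc]; ring,
        zpow_mul, horder, one_zpow]
    have hyo : orderOf y ≤ c := Nat.le_of_dvd hc0 (orderOf_dvd_of_pow_eq_one hyc)
    have hzo : orderOf z ≤ b := Nat.le_of_dvd (by omega) (orderOf_dvd_of_pow_eq_one hzb)
    have hsplit : a * h * a⁻¹ = (a * y * a⁻¹) * (a * z * a⁻¹) := by
      rw [hyz]; group
    rw [hsplit]
    exact H.mul_mem (ih (orderOf y) (by omega) y hyH rfl)
      (ih (orderOf z) (by omega) z hzH rfl)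
  exact fun h hh => main _ h hh rfl

lemma lemmaA [Finite Γ] (hnil : Group.IsNilpotent Γ) {p : ℕ} [Fact p.Prime]
    (H : Subgroup Γ) (hdvd : p ∣ H.index) :
    ∃ K : Subgroup Γ, H ≤ K ∧ Nat.card K = p * Nat.card H := by
  have hn : ∀ (q : ℕ) (_ : Fact q.Prime) (Q : Sylow q Γ), (Q : Subgroup Γ).Normal :=
    fun q _ Q => Sylow.normal_of_normalizerCondition normalizerCondition_of_isNilpotent Q
  obtain ⟨P⟩ : Nonempty (Sylow p Γ) := inferInstance
  set Q₀ : Subgroup Γ := (P : Subgroup Γ) with hQ₀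
  -- P is not contained in H
  have hPH : ¬ Q₀ ≤ H := by
    intro hle
    have h1 : H.index ∣ Q₀.index := Subgroup.index_dvd_of_le hle
    exact P.not_dvd_index (hdvd.trans h1)
  set R : Subgroup Γ := Q₀ ⊓ H with hR
  have hRQ : R ≤ Q₀ := inf_le_left
  have hRne : R.subgroupOf Q₀ ≠ ⊤ := by
    rw [Ne, Subgroup.subgroupOf_eq_top]
    intro hle
    exact hPH (fun x hx => (hle hx).2)
  obtain ⟨A', hRA', hA'N, hA'card⟩ := lemmaP P.isPGroup' (R.subgroupOf Q₀) hRne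
  set A : Subgroup Γ := A'.map Q₀.subtype with hA
  have hAP : A ≤ Q₀ := Subgroup.map_subtype_le A'
  have hRA : R ≤ A := by
    have : R = (R.subgroupOf Q₀).map Q₀.subtype := by
      rw [Subgroup.subgroupOf_map_subtype, inf_of_le_left hRQ]
    rw [this]; exact Subgroup.map_mono hRA'
  have hAcard : Nat.card A = p * Nat.card R := by
    rw [hA, cardMap _ Q₀.subtype_injective, hA'card]
    congr 1
    exact Nat.card_congr (Subgroup.subgroupOfEquivOfLe hRQ).toEquiv
  -- elements of A normalize R
  have hAnormR : ∀ a ∈ A, ∀ x ∈ R, a * x * a⁻¹ ∈ R := by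
    rintro a ha x hx
    obtain ⟨a', ha', rfl⟩ := ha
    have hxQ : x ∈ Q₀ := hRQ hx
    have : (⟨x, hxQ⟩ : Q₀) ∈ R.subgroupOf Q₀ := hx
    have hmem := ((Subgroup.mem_normalizer_iff.mp (hA'N ha')) ⟨x, hxQ⟩).mp this
    simpa [Subgroup.mem_subgroupOf] using hmem
  -- elements of A normalize H
  have hAnormH : ∀ a ∈ A, ∀ h ∈ H, a * h * a⁻¹ ∈ H := by
    intro a ha
    exact lemmaConj hn P H (hAP ha) (fun x hx => hAnormR a ha x hx)
  have hAnorm : A ≤ Subgroup.normalizer (H : Set Γ) := by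
    intro a ha
    rw [Subgroup.mem_normalizer_iff]
    intro h
    constructor
    · intro hh; exact hAnormH a ha h hh
    · intro hh
      have := hAnormH a⁻¹ (A.inv_mem ha) _ hh
      simpa [mul_assoc] using this
  -- now work inside the normalizer L of H
  set L : Subgroup Γ := Subgroup.normalizer (H : Set Γ) with hL
  have hHL : H ≤ L := Subgroup.le_normalizer
  set A₁ : Subgroup L := A.subgroupOf L with hA₁
  set H₁ : Subgroup L := H.subgroupOf L with hH₁
  haveI hH₁n : H₁.Normal := Subgroup.normal_in_normalizer
  set K : Subgroup Γ := A ⊔ H with hK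
  have hKL : K ≤ L := sup_le hAnorm hHL
  have hmapA : A₁.map L.subtype = A := by
    rw [hA₁, Subgroup.subgroupOf_map_subtype, inf_of_le_left hAnorm]
  have hmapH : H₁.map L.subtype = H := by
    rw [hH₁, Subgroup.subgroupOf_map_subtype, inf_of_le_left hHL]
  have hmapK : (A₁ ⊔ H₁).map L.subtype = K := by
    rw [Subgroup.map_sup, hmapA, hmapH]
  -- cardinalities
  have hcardA₁ : Nat.card A₁ = Nat.card A := by rw [← hmapA, cardMap _ L.subtype_injective]
  have hcardH₁ : Nat.card H₁ = Nat.card H := by rw [← hmapH, cardMap _ L.subtype_injective]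
  have hcardK : Nat.card (A₁ ⊔ H₁ : Subgroup L) = Nat.card K := by
    rw [← hmapK, cardMap _ L.subtype_injective]
  have hinf : H₁ ⊓ A₁ = R.subgroupOf L := by
    rw [hH₁, hA₁, hR]
    ext x
    simp only [Subgroup.mem_inf, Subgroup.mem_subgroupOf]
    constructor
    · rintro ⟨h1, h2⟩; exact ⟨hAP h2, h1⟩
    · rintro ⟨h1, h2⟩
      refine ⟨h2, ?_⟩
      have : (x : Γ) ∈ R := ⟨h1, h2⟩
      exact hRA this
  have hcardinf : Nat.card (H₁ ⊓ A₁ : Subgroup L) = Nat.card R := by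
    rw [hinf]
    have hRL : R ≤ L := hRA.trans hAnorm
    exact Nat.card_congr (Subgroup.subgroupOfEquivOfLe hRL).toEquiv
  have hRpos : 0 < Nat.card R := Nat.card_pos
  -- relindex computation
  have e1 : Nat.card A₁ = H₁.relIndex A₁ * Nat.card (H₁ ⊓ A₁ : Subgroup L) := by
    have := cardRel (H₁ ⊓ A₁) A₁ inf_le_right
    rwa [Subgroup.inf_relIndex_right] at this
  have e2 : Nat.card (A₁ ⊔ H₁ : Subgroup L) = H₁.relIndex (A₁ ⊔ H₁) * Nat.card H₁ :=
    cardRel H₁ (A₁ ⊔ H₁) le_sup_right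
  have e3 : H₁.relIndex (A₁ ⊔ H₁) = H₁.relIndex A₁ := by
    rw [sup_comm]
    exact Subgroup.relIndex_sup_left A₁ H₁
  have e4 : H₁.relIndex A₁ = p := by
    have : H₁.relIndex A₁ * Nat.card R = p * Nat.card R := by
      rw [← hcardinf, ← e1, hcardA₁, hAcard, hcardinf]
    exact Nat.eq_of_mul_eq_mul_right hRpos this
  refine ⟨K, le_sup_right, ?_⟩
  rw [← hcardK, e2, e3, e4, hcardH₁]

end AuxiliaryGroupTheory

lemma smul_coe (G : Subgroup (Equiv.Perm Ω)) (g : ↥G) (Δ : Set Ω) :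
    g • Δ = (g : Equiv.Perm Ω) • Δ := rfl

lemma isBlock_iff (G : Subgroup (Equiv.Perm Ω)) (Δ : Set Ω) :
    IsBlock G Δ ↔ MulAction.IsBlock ↥G Δ := by
  rw [MulAction.isBlock_iff_smul_eq_smul_or_disjoint]
  constructor
  · intro h g₁ g₂
    rcases h ((g₂ : Equiv.Perm Ω)⁻¹ * g₁) (G.mul_mem (G.inv_mem g₂.2) g₁.2) with h1 | h1
    · left
      have h2 : (g₂ : Equiv.Perm Ω) • ((g₂ : Equiv.Perm Ω)⁻¹ * (g₁ : Equiv.Perm Ω)) • Δ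
          = (g₂ : Equiv.Perm Ω) • Δ := by rw [h1]
      rw [smul_smul, mul_inv_cancel_left] at h2
      exact h2
    · right
      have h2 := (Set.disjoint_smul_set (a := (g₂ : Equiv.Perm Ω))).mpr h1
      rw [smul_smul, mul_inv_cancel_left] at h2
      exact h2
  · intro h g hg
    rcases h ⟨g, hg⟩ 1 with h1 | h1
    · left; exact h1.trans (one_smul _ _)
    · right
      have h2 := h1
      rw [one_smul] at h2
      exact h2

/-- In a transitive nilpotent group, a block of size `p^l < p^m` (the largest
`p`-power dividing `#Ω`) has a maximal superblock of index `p` over it. -/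
theorem stmt13 [Fintype Ω] (G : Subgroup (Equiv.Perm Ω)) (hG : IsTransitive G)
    (hnil : Group.IsNilpotent ↥G) (p : ℕ) (hp : p.Prime)
    (hpG : p ∣ Nat.card ↥G) (Δ : Set Ω) (hΔ : IsBlock G Δ) (l m : ℕ)
    (hcard : Δ.ncard = p ^ l) (hm : (Fintype.card Ω).factorization p = m)
    (hlm : l < m) :
    ∃ S : Set Ω, IsMaximalSubblock G Δ S ∧ S.ncard = p * Δ.ncard := by
  haveI : Fact p.Prime := ⟨hp⟩
  haveI : MulAction.IsPretransitive ↥G Ω := by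
    constructor
    intro x y
    obtain ⟨g, hg, hgx⟩ := hG x y
    exact ⟨⟨g, hg⟩, hgx⟩
  -- Δ is nonempty
  have hΔne : Δ.Nonempty := by
    rw [← Set.ncard_pos (Set.toFinite Δ), hcard]
    exact pow_pos hp.pos l
  obtain ⟨α, hα⟩ := hΔne
  haveI : Nonempty Ω := ⟨α⟩
  have hB : MulAction.IsBlock ↥G Δ := (isBlock_iff G Δ).mp hΔ
  set H : Subgroup ↥G := MulAction.stabilizer ↥G Δ with hH
  have hsub : MulAction.stabilizer ↥G α ≤ H := hB.stabilizer_le hα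
  have hΔrel : Δ.ncard = (MulAction.stabilizer ↥G α).relIndex H :=
    hB.ncard_block_eq_relIndex hα
  have hidx : (MulAction.stabilizer ↥G α).relIndex H * H.index
      = (MulAction.stabilizer ↥G α).index := Subgroup.relIndex_mul_index hsub
  have hstabidx : (MulAction.stabilizer ↥G α).index = Nat.card Ω :=
    MulAction.index_stabilizer_of_transitive ↥G α
  have hΩcard : (p : ℕ) ^ l * H.index = Fintype.card Ω := by
    rw [← Nat.card_eq_fintype_card, ← hstabidx, ← hidx, ← hΔrel, hcard]
  -- p ∣ H.index
  have hΩ0 : Fintype.card Ω ≠ 0 := Fintype.card_ne_zero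
  have hdvdΩ : p ^ (l + 1) ∣ Fintype.card Ω :=
    (Nat.Prime.pow_dvd_iff_le_factorization hp hΩ0).mpr (by omega)
  have hdvdH : p ∣ H.index := by
    have h2 : p ^ l * p ∣ p ^ l * H.index := by rw [← pow_succ, hΩcard]; exact hdvdΩ
    exact (Nat.mul_dvd_mul_iff_left (pow_pos hp.pos l)).mp h2
  -- get the extension K
  obtain ⟨K, hHK, hKcard⟩ := lemmaA hnil H hdvdH
  have hsubK : MulAction.stabilizer ↥G α ≤ K := hsub.trans hHK
  set Sig : Set Ω := MulAction.orbit K α with hSig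
  have hSgB : MulAction.IsBlock ↥G Sig := MulAction.IsBlock.of_orbit hsubK
  have hαSg : α ∈ Sig := MulAction.mem_orbit_self α
  have hstabSg : MulAction.stabilizer ↥G Sig = K := MulAction.stabilizer_orbit_eq hsubK
  have hHpos : 0 < Nat.card H := Nat.card_pos
  have hrelHK : H.relIndex K = p := by
    have h1 : Nat.card K = H.relIndex K * Nat.card H := cardRel H K hHK
    rw [hKcard] at h1
    exact (Nat.eq_of_mul_eq_mul_right hHpos h1.symm)
  have hSgcard : Sig.ncard = p * Δ.ncard := by
    have h1 : Sig.ncard = (MulAction.stabilizer ↥G α).relIndex K := by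
      have := hSgB.ncard_block_eq_relIndex hαSg
      rwa [hstabSg] at this
    rw [h1, ← Subgroup.relIndex_mul_relIndex _ _ _ hsub hHK, hrelHK, ← hΔrel, mul_comm]
  -- Δ ⊂ Sig
  have hΔorb : MulAction.orbit H α = Δ := hB.orbit_stabilizer_eq hα
  have hΔSg : Δ ⊆ Sig := by
    rw [← hΔorb]
    rintro x ⟨⟨h, hh⟩, rfl⟩
    exact ⟨⟨h, hHK hh⟩, rfl⟩
  have hΔSgne : Δ ≠ Sig := by
    intro he
    have : Nat.card H = Nat.card K := by
      rw [← hstabSg, ← he]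
    rw [hKcard] at this
    nlinarith [hp.two_le, hHpos]
  refine ⟨Sig, ⟨hΔ, (isBlock_iff G Sig).mpr hSgB, ⟨hΔSg, fun h => hΔSgne (le_antisymm hΔSg h)⟩, ?_⟩,
    hSgcard⟩
  -- maximality
  rintro Υ hΥ ⟨hΔΥ, hΥSg⟩
  have hΥB : MulAction.IsBlock ↥G Υ := (isBlock_iff G Υ).mp hΥ
  have hαΥ : α ∈ Υ := hΔΥ.1 hα
  set M : Subgroup ↥G := MulAction.stabilizer ↥G Υ with hM
  have hHM : H ≤ M := by
    intro g hg
    have : g • Δ = Δ := hg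
    rw [MulAction.mem_stabilizer_iff]
    rcases hΥB.smul_eq_smul_or_disjoint g 1 with h1 | h1
    · rw [one_smul] at h1; exact h1
    · exfalso
      rw [one_smul] at h1
      have : α ∈ g • Υ := by
        have : g • Δ = Δ := hg
        have hαg : α ∈ g • Δ := this.symm ▸ hα
        exact Set.smul_set_mono hΔΥ.1 hαg
      exact Set.disjoint_left.mp h1 this hαΥ
  have hMK : M ≤ K := by
    rw [← hstabSg]
    intro g hg
    have hgΥ : g • Υ = Υ := hg
    rcases hSgB.smul_eq_smul_or_disjoint g 1 with h1 | h1
    · rw [one_smul] at h1; exact h1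
    · exfalso
      rw [one_smul] at h1
      have : α ∈ g • Sig := by
        have hαg : α ∈ g • Υ := hgΥ.symm ▸ hαΥ
        exact Set.smul_set_mono hΥSg.1 hαg
      exact Set.disjoint_left.mp h1 this hαSg
  -- strictness via cardinalities
  have hΥrel : Υ.ncard = (MulAction.stabilizer ↥G α).relIndex M :=
    hΥB.ncard_block_eq_relIndex hαΥ
  have hsubM : MulAction.stabilizer ↥G α ≤ M := hΥB.stabilizer_le hαΥ
  have hrel1 : H.relIndex M * M.relIndex K = H.relIndex K :=
    Subgroup.relIndex_mul_relIndex _ _ _ hHM hMK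
  rw [hrelHK] at hrel1
  -- Δ.ncard < Υ.ncard < Sig.ncard forces contradiction
  have hΥM : MulAction.orbit M α = Υ := hΥB.orbit_stabilizer_eq hαΥ
  have hne1 : H ≠ M := by
    intro he
    have : MulAction.orbit H α = Υ := he ▸ hΥM
    rw [hΔorb] at this
    exact hΔΥ.2 (this ▸ le_refl Υ)
  have hne2 : M ≠ K := by
    intro he
    have : MulAction.orbit M α = Sig := by rw [he]
    rw [hΥM] at this
    exact hΥSg.2 (this ▸ le_refl Sig)
  have hdm : H.relIndex M ≠ 1 := by
    intro h1
    have := cardRel H M hHM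
    rw [h1, one_mul] at this
    exact hne1 (Subgroup.eq_of_le_of_card_ge hHM this.le)
  have hdk : M.relIndex K ≠ 1 := by
    intro h1
    have := cardRel M K hMK
    rw [h1, one_mul] at this
    exact hne2 (Subgroup.eq_of_le_of_card_ge hMK this.le)
  have hdvd' : H.relIndex M ∣ p := ⟨M.relIndex K, hrel1.symm⟩
  rcases (hp.eq_one_or_self_of_dvd _ hdvd') with h1 | h1
  · exact hdm h1
  · rw [h1] at hrel1
    exact hdk (Nat.eq_of_mul_eq_mul_left hp.pos (by rw [mul_one]; exact hrel1))

end GaloisBlocks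
end

section
/- Let G be a transitive nilpotent permutation group on a finite set Ω and p a prime. Let Δ ⊂ Σ be G-blocks with |Δ| a power of p, Δ a maximal subblock of Σ, and [Σ : Δ] = p. Then the setwise stabilizer G_Δ is a normal subgroup of G_Σ, and G_Σ/G_Δ is cyclic of order p. -/
open Pointwise

namespace GaloisBlocks

variable {Ω : Type*}

/-- In a transitive nilpotent group, for blocks `Δ ⊂ S` with `|Δ|` a `p`-power,
`Δ` maximal in `S` and `[S : Δ] = p`, the stabilizer `G_Δ` is normal in `G_S`
with quotient cyclic of order `p`. -/
theorem stmt14 [Fintype Ω] (G : Subgroup (Equiv.Perm Ω)) (hG : IsTransitive G)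
    (hnil : Group.IsNilpotent ↥G) (p : ℕ) (hp : p.Prime) (Δ S : Set Ω)
    (l : ℕ) (hcard : Δ.ncard = p ^ l) (hmax : IsMaximalSubblock G Δ S)
    (hindex : S.ncard = p * Δ.ncard) :
    ((stab G Δ).subgroupOf (stab G S)).Normal ∧
    ∃ φ : ↥(stab G S) →* Multiplicative (ZMod p),
      Function.Surjective φ ∧
      φ.ker = (stab G Δ).subgroupOf (stab G S) := by

  classical
  obtain ⟨hDblock, hSblock, hsub, -⟩ := hmax
  have hDS : Δ ⊆ S := hsub.1
  have hDpos : 0 < Δ.ncard := by rw [hcard]; exact pow_pos hp.pos l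
  have hDne : Δ.Nonempty := Set.nonempty_of_ncard_ne_zero (by omega)
  set K : Subgroup (Equiv.Perm Ω) := stab G S with hKdef
  have hKG : K ≤ G := inf_le_left
  have hKS : ∀ g : K, (g : Equiv.Perm Ω) • S = S := fun g =>
    (Subgroup.mem_inf.mp g.2).2
  -- S as a SubMulAction of K
  let M : SubMulAction K Ω :=
    { carrier := S
      smul_mem' := by
        intro c x hx
        have : (c : Equiv.Perm Ω) • x ∈ (c : Equiv.Perm Ω) • S :=
          Set.smul_mem_smul_set hx
        rwa [hKS c] at this }
  -- K acts pretransitively on M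
  haveI htrans : MulAction.IsPretransitive K M := by
    constructor
    intro x y
    obtain ⟨g, hgG, hgxy⟩ := hG (x : Ω) (y : Ω)
    have hgS : g • S = S := by
      rcases hSblock g hgG with h | h
      · exact h
      · exfalso
        have hy1 : (y : Ω) ∈ g • S := ⟨(x : Ω), x.2, hgxy⟩
        exact Set.disjoint_left.mp h hy1 y.2
    have hgK : g ∈ K := Subgroup.mem_inf.mpr ⟨hgG, hgS⟩
    exact ⟨⟨g, hgK⟩, Subtype.ext hgxy⟩
  -- Δ is a block for the K-action on Ω
  have hDblockK : MulAction.IsBlock K Δ := by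
    rw [MulAction.isBlock_iff_smul_eq_or_disjoint]
    intro g
    exact hDblock (g : Equiv.Perm Ω) (hKG g.2)
  -- the preimage of Δ in M
  set Δ' : Set M := Subtype.val ⁻¹' Δ with hD'def
  have hD'block : MulAction.IsBlock K Δ' := hDblockK.subtype_val_preimage
  have hD'image : Subtype.val '' Δ' = Δ := by
    rw [hD'def, Set.image_preimage_eq_inter_range, Subtype.range_coe_subtype]
    exact Set.inter_eq_self_of_subset_left hDS
  have hD'card : Δ'.ncard = Δ.ncard := by
    rw [← hD'image]
    exact (Set.ncard_image_of_injective _ Subtype.val_injective).symm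
  have hD'ne : Δ'.Nonempty := by
    obtain ⟨x, hx⟩ := hDne
    exact ⟨⟨x, hDS hx⟩, hx⟩
  -- key smul computation
  have hsmul : ∀ (g : K) (B : Set Ω),
      g • (Subtype.val ⁻¹' B : Set M) = Subtype.val ⁻¹' ((g : Equiv.Perm Ω) • B) := by
    intro g B
    ext x
    rw [Set.mem_smul_set_iff_inv_smul_mem, Set.mem_preimage, Set.mem_preimage,
      Set.mem_smul_set_iff_inv_smul_mem]
    constructor
    · intro h
      have : ((g⁻¹ • x : M) : Ω) = (g : Equiv.Perm Ω)⁻¹ • (x : Ω) := rfl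
      rwa [this] at h
    · intro h
      have : ((g⁻¹ • x : M) : Ω) = (g : Equiv.Perm Ω)⁻¹ • (x : Ω) := rfl
      rwa [← this] at h
  -- the stabilizer of Δ' in K is (stab G Δ).subgroupOf K
  have hstab : MulAction.stabilizer K Δ' = (stab G Δ).subgroupOf K := by
    ext g
    rw [MulAction.mem_stabilizer_iff, Subgroup.mem_subgroupOf]
    constructor
    · intro h
      refine Subgroup.mem_inf.mpr ⟨hKG g.2, ?_⟩
      rw [MulAction.mem_stabilizer_iff]
      have himg := congrArg (Set.image (Subtype.val : M → Ω)) h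
      rw [hD'def, hsmul g Δ] at himg
      have h1 : (g : Equiv.Perm Ω) • Δ ⊆ Set.range (Subtype.val : M → Ω) := by
        rw [Subtype.range_coe_subtype]
        intro y hy
        obtain ⟨x, hx, rfl⟩ := hy
        have : (g : Equiv.Perm Ω) • x ∈ (g : Equiv.Perm Ω) • S :=
          Set.smul_mem_smul_set (hDS hx)
        rwa [hKS g] at this
      rw [Set.image_preimage_eq_of_subset h1] at himg
      rw [himg, hD'image]
    · intro h
      have hgD : (g : Equiv.Perm Ω) • Δ = Δ := (Subgroup.mem_inf.mp h).2
      rw [hD'def, hsmul g Δ, hgD]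
  -- orbit counting
  have hcount : Δ'.ncard * (MulAction.orbit K Δ').ncard = Nat.card M :=
    hD'block.ncard_block_mul_ncard_orbit_eq hD'ne
  have hcardM : Nat.card M = S.ncard := by
    have : Nat.card M = Nat.card S := Nat.card_congr (Equiv.refl _)
    rw [this, Nat.card_coe_set_eq]
  have hidx : (MulAction.stabilizer K Δ').index = (MulAction.orbit K Δ').ncard :=
    MulAction.index_stabilizer K Δ'
  have hindexp : ((stab G Δ).subgroupOf K).index = p := by
    have h1 : Δ.ncard * ((stab G Δ).subgroupOf K).index = Δ.ncard * p := by
      rw [← hstab, hidx, ← hD'card, hcount, hcardM, hindex, mul_comm, hD'card]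
    exact Nat.eq_of_mul_eq_mul_left hDpos h1
  -- K is nilpotent
  haveI hKnil : Group.IsNilpotent K :=
    nilpotent_of_mulEquiv (Subgroup.subgroupOfEquivOfLe hKG)
  -- normality
  set H : Subgroup K := (stab G Δ).subgroupOf K with hHdef
  have hHtop : H ≠ ⊤ := by
    intro h
    rw [h, Subgroup.index_top] at hindexp
    exact hp.one_lt.ne hindexp
  have hnorm : H.Normal := by
    have hnc := normalizerCondition_of_isNilpotent (G := K)
    have hlt : H < Subgroup.normalizer (H : Set K) := hnc H (lt_top_iff_ne_top.mpr hHtop)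
    have hdvd : (Subgroup.normalizer (H : Set K)).index ∣ H.index :=
      Subgroup.index_dvd_of_le Subgroup.le_normalizer
    rcases (hp.eq_one_or_self_of_dvd _ (hindexp ▸ hdvd)) with h1 | h1
    · rw [← Subgroup.normalizer_eq_top_iff]
      exact Subgroup.index_eq_one.mp h1
    · exfalso
      have h2 : H.relIndex (Subgroup.normalizer (H : Set K)) * (Subgroup.normalizer (H : Set K)).index = H.index :=
        Subgroup.relIndex_mul_index Subgroup.le_normalizer
      rw [h1, hindexp] at h2
      have h3 : H.relIndex (Subgroup.normalizer (H : Set K)) = 1 :=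
        Nat.eq_of_mul_eq_mul_right hp.pos (h2.trans (one_mul p).symm)
      exact hlt.ne (le_antisymm Subgroup.le_normalizer
        (Subgroup.relIndex_eq_one.mp h3))
  refine ⟨hnorm, ?_⟩
  -- the quotient is cyclic of order p
  haveI := hnorm
  haveI := Fact.mk hp
  have hcardQ : Nat.card (K ⧸ H) = p := by
    rw [← hindexp]; rfl
  haveI hcyc : IsCyclic (K ⧸ H) := isCyclic_of_prime_card hcardQ
  subst hcardQ
  let e : Multiplicative (ZMod (Nat.card (K ⧸ H))) ≃* (K ⧸ H) :=
    zmodCyclicMulEquiv hcyc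
  refine ⟨e.symm.toMonoidHom.comp (QuotientGroup.mk' H), ?_, ?_⟩
  · exact e.symm.surjective.comp (QuotientGroup.mk'_surjective H)
  · ext x
    rw [MonoidHom.mem_ker, MonoidHom.comp_apply, MulEquiv.coe_toMonoidHom,
      MulEquiv.map_eq_one_iff, ← MonoidHom.mem_ker, QuotientGroup.ker_mk']


end GaloisBlocks
end

section
/- Let f ∈ ℚ[X] be irreducible with Galois group G acting on the set Ω of roots of f in a splitting field, let Δ ⊆ Ω be a G-block containing a root α, and let ℚ_Δ be the fixed field of the setwise stabilizer G_Δ. Then the irreducible factor of f over ℚ_Δ having α as a root is exactly T_Δ(X) = ∏_{η ∈ Δ}(X − η). Moreover, for any G-block Σ ⊇ Δ and any irreducible factor g of f over ℚ_Δ, Σ contains one root of g if and only if Σ contains all roots of g. -/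
open Pointwise Polynomial

/-- Let `f ∈ ℚ[X]` be irreducible with Galois group `G = f.Gal` acting on the
set of roots of `f` in its splitting field, let `Δ` be a `G`-block of roots
containing a root `α`, and let `ℚ_Δ` be the fixed field of the setwise
stabilizer `G_Δ`. Then the irreducible factor of `f` over `ℚ_Δ` having `α` as
a root (i.e. the minimal polynomial of `α` over `ℚ_Δ`) is exactly
`T_Δ(X) = ∏_{η ∈ Δ} (X - η)`; and for any `G`-block `S ⊇ Δ` of roots and any
irreducible factor `g` of `f` over `ℚ_Δ`, `S` contains one root of `g` iff it
contains all roots of `g`. -/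
theorem stmt18 (f : Polynomial ℚ) (hf : Irreducible f)
    (Δ : Set f.SplittingField) (hfin : Δ.Finite)
    (hroots : Δ ⊆ f.rootSet f.SplittingField)
    (hblock : ∀ σ : f.Gal, σ • Δ = Δ ∨ Disjoint (σ • Δ) Δ)
    (α : f.SplittingField) (hα : α ∈ Δ) :
    ((minpoly (↥(IntermediateField.fixedField (MulAction.stabilizer f.Gal Δ))) α).map
        (algebraMap (↥(IntermediateField.fixedField (MulAction.stabilizer f.Gal Δ)))
          f.SplittingField) =
      ∏ η ∈ hfin.toFinset, (X - C η)) ∧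
    ∀ S : Set f.SplittingField, S ⊆ f.rootSet f.SplittingField →
      (∀ σ : f.Gal, σ • S = S ∨ Disjoint (σ • S) S) → Δ ⊆ S →
      ∀ g : Polynomial ↥(IntermediateField.fixedField (MulAction.stabilizer f.Gal Δ)),
        Irreducible g →
        g ∣ f.map (algebraMap ℚ ↥(IntermediateField.fixedField (MulAction.stabilizer f.Gal Δ))) →
        (∃ β, aeval β g = 0 ∧ β ∈ S) →
        ∀ β : f.SplittingField, aeval β g = 0 → β ∈ S := by
  classical
  haveI : IsGalois ℚ f.SplittingField := IsGalois.mk (to_normal := Polynomial.SplittingField.instNormal f)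
  set K := IntermediateField.fixedField (MulAction.stabilizer f.Gal Δ) with hKdef
  haveI : IsGalois (↥K) f.SplittingField := IsGalois.tower_top_of_isGalois ℚ (↥K) f.SplittingField
  have hf0 : f ≠ 0 := hf.ne_zero
  -- transitivity of the Galois group on the roots
  have htrans : ∀ a b : f.SplittingField, a ∈ f.rootSet f.SplittingField → b ∈ f.rootSet f.SplittingField → ∃ σ : f.Gal, σ b = a := by
    intro a b ha hb
    have ha' : aeval a f = 0 := (Polynomial.mem_rootSet.mp ha).2
    have hb' : aeval b f = 0 := (Polynomial.mem_rootSet.mp hb).2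
    have hmin : minpoly ℚ a = f * C f.leadingCoeff⁻¹ := (minpoly.eq_of_irreducible hf ha').symm
    have hev : aeval b (minpoly ℚ a) = 0 := by
      rw [hmin, map_mul, hb', zero_mul]
    exact minpoly.exists_algEquiv_of_root (Algebra.IsAlgebraic.isAlgebraic a) hev
  -- a `K`-algebra automorphism restricts to an element of the stabilizer
  have hmemH : ∀ σ : f.SplittingField ≃ₐ[K] f.SplittingField,
      (σ.restrictScalars ℚ) ∈ MulAction.stabilizer f.Gal Δ := by
    intro σ
    have hmem : (σ.restrictScalars ℚ) ∈ IntermediateField.fixingSubgroup K := by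
      refine (IntermediateField.mem_fixingSubgroup_iff (K := K) _).mpr ?_
      intro y hy
      exact σ.commutes ⟨y, hy⟩
    exact (SetLike.ext_iff.mp
      (IntermediateField.fixingSubgroup_fixedField (MulAction.stabilizer f.Gal Δ)) _).mp hmem
  -- conversely, an element of the stabilizer gives a `K`-algebra automorphism
  have hstabK : ∀ σ : f.Gal, σ ∈ MulAction.stabilizer f.Gal Δ →
      σ ∈ IntermediateField.fixingSubgroup K := by
    intro σ hσ
    exact (SetLike.ext_iff.mp
      (IntermediateField.fixingSubgroup_fixedField (MulAction.stabilizer f.Gal Δ)) σ).mpr hσ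
  -- the orbit of `α` under `Gal(f.SplittingField/K)` is exactly `Δ`
  have horb : ∀ η : f.SplittingField, η ∈ Δ ↔ ∃ σ : f.SplittingField ≃ₐ[K] f.SplittingField, σ α = η := by
    intro η
    constructor
    · intro hη
      obtain ⟨σ, hσ⟩ := htrans η α (hroots hη) (hroots hα)
      have hnd : ¬ Disjoint (σ • Δ) Δ := by
        rw [Set.not_disjoint_iff]
        refine ⟨η, ?_, hη⟩
        rw [← hσ]
        exact Set.smul_mem_smul_set hα
      have hstab : σ ∈ MulAction.stabilizer f.Gal Δ := (hblock σ).resolve_right hnd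
      exact ⟨IntermediateField.fixingSubgroupEquiv K ⟨σ, hstabK σ hstab⟩, hσ⟩
    · rintro ⟨σ, rfl⟩
      have hstab := hmemH σ
      have hΔ : (σ.restrictScalars ℚ) • Δ = Δ := hstab
      have : (σ.restrictScalars ℚ) • α ∈ (σ.restrictScalars ℚ) • Δ :=
        Set.smul_mem_smul_set hα
      rw [hΔ] at this
      exact this
  have hintα : IsIntegral (↥K) α := IsIntegral.of_finite (↥K) α
  -- the roots of the minimal polynomial are exactly `Δ`
  have hrootiff : ∀ η : f.SplittingField, aeval η (minpoly (↥K) α) = 0 ↔ η ∈ Δ := by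
    intro η
    constructor
    · intro hev
      obtain ⟨σ, hσ⟩ := minpoly.exists_algEquiv_of_root' hintα.isAlgebraic hev
      exact (horb η).mpr ⟨σ, hσ⟩
    · intro hη
      obtain ⟨σ, rfl⟩ := (horb η).mp hη
      simpa using aeval_algHom_apply (σ : f.SplittingField →ₐ[↥K] f.SplittingField) α (minpoly (↥K) α)
  refine ⟨?_, ?_⟩
  · -- Part 1
    have hmonic : (minpoly (↥K) α).Monic := minpoly.monic hintα
    have hM : ((minpoly (↥K) α).map (algebraMap (↥K) f.SplittingField)).Monic := hmonic.map _
    have hsplits : Splits ((minpoly (↥K) α).map (algebraMap (↥K) f.SplittingField)) := by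
      exact Normal.splits inferInstance α
    have hsep : ((minpoly (↥K) α).map (algebraMap (↥K) f.SplittingField)).Separable :=
      Polynomial.Separable.map (Algebra.IsSeparable.isSeparable (↥K) α)
    have hnodup : ((minpoly (↥K) α).map (algebraMap (↥K) f.SplittingField)).roots.Nodup :=
      Polynomial.nodup_roots hsep
    have hrootsset : ((minpoly (↥K) α).map (algebraMap (↥K) f.SplittingField)).roots.toFinset = hfin.toFinset := by
      ext η
      rw [Multiset.mem_toFinset, Polynomial.mem_roots hM.ne_zero, Set.Finite.mem_toFinset]
      constructor
      · intro h
        have : aeval η (minpoly (↥K) α) = 0 := by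
          rwa [aeval_def, ← Polynomial.eval_map]
        exact (hrootiff η).mp this
      · intro h
        have := (hrootiff η).mpr h
        rw [aeval_def, ← Polynomial.eval_map] at this
        exact this
    rw [hsplits.eq_prod_roots_of_monic hM, ← hrootsset,
      Finset.prod_eq_multiset_prod, Multiset.toFinset_val,
      Multiset.dedup_eq_self.mpr hnodup]
  · -- Part 2
    intro S _hSroots hSblock hΔS g hgirr _hgdvd ⟨β₀, hβ₀root, hβ₀S⟩ β hβroot
    have hintβ₀ : IsIntegral (↥K) β₀ := IsIntegral.of_finite (↥K) β₀
    have hmin : minpoly (↥K) β₀ = g * C g.leadingCoeff⁻¹ := (minpoly.eq_of_irreducible hgirr hβ₀root).symm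
    have hev : aeval β (minpoly (↥K) β₀) = 0 := by
      rw [hmin, map_mul, hβroot, zero_mul]
    obtain ⟨σ, hσ⟩ := minpoly.exists_algEquiv_of_root' hintβ₀.isAlgebraic hev
    set σ' : f.Gal := σ.restrictScalars ℚ with hσ'def
    have hσ'Δ : σ' • Δ = Δ := hmemH σ
    rcases hSblock σ' with hS | hS
    · rw [← hS]
      have : σ' • β₀ = β := hσ
      rw [← this]
      exact Set.smul_mem_smul_set hβ₀S
    · exfalso
      have h1 : σ' • α ∈ σ' • S := Set.smul_mem_smul_set (hΔS hα)
      have h2 : σ' • α ∈ S := by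
        have : σ' • α ∈ σ' • Δ := Set.smul_mem_smul_set hα
        rw [hσ'Δ] at this
        exact hΔS this
      exact Set.disjoint_left.mp hS h1 h2
end

section
/- Let f ∈ ℚ[X] be irreducible with Galois group G acting on the root set Ω, α ∈ Ω, and let {α} = Δ_0 ⊂ ... ⊂ Δ_m be a maximal chain of G-blocks with Δ_m = α^{G_p} the orbit of α under a p-Sylow subgroup of G, such that [Δ_{i+1} : Δ_i] = p for all i. Let ℚ_{Δ_i} be the fixed field of G_{Δ_i}. If each extension ℚ_{Δ_i}/ℚ_{Δ_{i+1}} is normal and p does not divide the order of the Galois group of the normal closure of ℚ_{Δ_m} over ℚ, then G^{Δ_m} is a normal p-Sylow subgroup of G. -/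
open Pointwise Polynomial

private lemma aux_point_stab_le {G X : Type*} [Group G] [MulAction G X] {S : Set X} {a : X}
    (ha : a ∈ S) (hS : ∀ σ : G, σ • S = S ∨ Disjoint (σ • S) S) :
    MulAction.stabilizer G a ≤ MulAction.stabilizer G S := by
  intro σ hσ
  rw [MulAction.mem_stabilizer_iff] at hσ ⊢
  rcases hS σ with h | h
  · exact h
  · have hmem : a ∈ σ • S := Set.mem_smul_set.mpr ⟨a, ha, hσ⟩
    exact absurd ha (Set.disjoint_left.mp h hmem)

private lemma aux_stab_mono {G X : Type*} [Group G] [MulAction G X] {S T : Set X}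
    (hST : S ⊆ T) (hS : S.Nonempty)
    (hT : ∀ σ : G, σ • T = T ∨ Disjoint (σ • T) T) :
    MulAction.stabilizer G S ≤ MulAction.stabilizer G T := by
  intro σ hσ
  rw [MulAction.mem_stabilizer_iff] at hσ ⊢
  rcases hT σ with h | h
  · exact h
  · obtain ⟨x, hx⟩ := hS
    have hx1 : x ∈ σ • T := Set.smul_set_mono hST (by rw [hσ]; exact hx)
    exact absurd (hST hx) (Set.disjoint_left.mp h hx1)

private lemma gal_trans {f : Polynomial ℚ} (hf : Irreducible f) {x y : f.SplittingField}
    (hx : x ∈ f.rootSet f.SplittingField) (hy : y ∈ f.rootSet f.SplittingField) :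
    ∃ σ : f.Gal, σ x = y := by
  have hx' := minpoly.eq_of_irreducible hf (Polynomial.mem_rootSet.mp hx).2
  have hy' := minpoly.eq_of_irreducible hf (Polynomial.mem_rootSet.mp hy).2
  obtain ⟨σ, hσ⟩ := (Normal.minpoly_eq_iff_mem_orbit f.SplittingField (h := Polynomial.SplittingField.instNormal f)).mp (hy'.symm.trans hx')
  exact ⟨σ, hσ⟩

private lemma aux_orbit_eq {f : Polynomial ℚ} (hf : Irreducible f) {T : Set f.SplittingField}
    (hTroot : T ⊆ f.rootSet f.SplittingField)
    (hTblock : ∀ σ : f.Gal, σ • T = T ∨ Disjoint (σ • T) T)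
    {a : f.SplittingField} (haT : a ∈ T) :
    MulAction.orbit (MulAction.stabilizer f.Gal T) a = T := by
  ext γ
  constructor
  · rintro ⟨⟨σ, hσ⟩, rfl⟩
    have : σ • T = T := hσ
    show σ • a ∈ T
    rw [← this]
    exact Set.smul_mem_smul_set haT
  · intro hγ
    obtain ⟨σ, hσ⟩ := gal_trans hf (hTroot haT) (hTroot hγ)
    have hσT : σ • T = T := by
      rcases hTblock σ with h | h
      · exact h
      · have hmem : γ ∈ σ • T := Set.mem_smul_set.mpr ⟨a, haT, hσ⟩
        exact absurd hγ (Set.disjoint_left.mp h hmem)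
    exact ⟨⟨σ, hσT⟩, hσ⟩

private lemma aux_relindex {f : Polynomial ℚ} (hf : Irreducible f)
    {S : Set f.SplittingField} {a : f.SplittingField}
    (hroot : S ⊆ f.rootSet f.SplittingField)
    (hblock : ∀ σ : f.Gal, σ • S = S ∨ Disjoint (σ • S) S)
    (ha : a ∈ S) :
    (MulAction.stabilizer f.Gal a).relIndex (MulAction.stabilizer f.Gal S) = S.ncard := by
  have key : (MulAction.stabilizer f.Gal a).subgroupOf (MulAction.stabilizer f.Gal S)
      = MulAction.stabilizer (MulAction.stabilizer f.Gal S) a := by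
    ext; rfl
  rw [Subgroup.relIndex, key, MulAction.index_stabilizer, aux_orbit_eq hf hroot hblock ha]

private lemma aux_step {f : Polynomial ℚ} (hf : Irreducible f) {p : ℕ}
    {S T : Set f.SplittingField} {a : f.SplittingField}
    (hSroot : S ⊆ f.rootSet f.SplittingField) (hTroot : T ⊆ f.rootSet f.SplittingField)
    (hSb : ∀ σ : f.Gal, σ • S = S ∨ Disjoint (σ • S) S)
    (hTb : ∀ σ : f.Gal, σ • T = T ∨ Disjoint (σ • T) T)
    (hST : S ⊆ T) (haS : a ∈ S)
    (hcard : T.ncard = p * S.ncard) :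
    ((MulAction.stabilizer f.Gal S).subgroupOf (MulAction.stabilizer f.Gal T)).index = p := by
  have hle1 := aux_point_stab_le haS hSb
  have hle2 := aux_stab_mono hST ⟨a, haS⟩ hTb
  have h1 := aux_relindex hf hSroot hSb haS
  have h2 := aux_relindex hf hTroot hTb (hST haS)
  have hmul := Subgroup.relIndex_mul_relIndex _ _ _ hle1 hle2
  rw [h1, h2, hcard] at hmul
  have hSpos : 0 < S.ncard :=
    (Set.ncard_pos ((f.rootSet_finite _).subset hSroot)).mpr ⟨a, haS⟩
  have : S.ncard * (MulAction.stabilizer f.Gal S).relIndex (MulAction.stabilizer f.Gal T)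
      = S.ncard * p := by rw [hmul, mul_comm]
  have := Nat.eq_of_mul_eq_mul_left hSpos this
  exact this

private lemma aux_descend {G : Type*} [Group G] [Finite G] {p : ℕ} {A B : Subgroup G}
    (hAB : A ≤ B) (hnorm : (A.subgroupOf B).Normal)
    (hidx : (A.subgroupOf B).index = p)
    {x : G} (hxB : x ∈ B) (hco : Nat.Coprime (orderOf x) p) : x ∈ A := by
  haveI := hnorm
  set x' : ↥B := ⟨x, hxB⟩ with hx'
  have hord : orderOf x' = orderOf x := by
    have := orderOf_injective B.subtype B.subtype_injective x'
    exact this.symm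
  have h1 : orderOf (((x' : ↥B) : ↥B ⧸ A.subgroupOf B)) ∣ orderOf x := by
    rw [← hord]
    exact orderOf_map_dvd (QuotientGroup.mk' _) x'
  have h2 : orderOf (((x' : ↥B) : ↥B ⧸ A.subgroupOf B)) ∣ p := by
    have := orderOf_dvd_natCard ((x' : ↥B) : ↥B ⧸ A.subgroupOf B)
    rwa [← Subgroup.index_eq_card, hidx] at this
  have : orderOf (((x' : ↥B) : ↥B ⧸ A.subgroupOf B)) ∣ 1 := by
    rw [← hco]
    exact Nat.dvd_gcd h1 h2
  have hone : (((x' : ↥B) : ↥B ⧸ A.subgroupOf B)) = 1 :=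
    orderOf_eq_one_iff.mp (Nat.dvd_one.mp this)
  exact Subgroup.mem_subgroupOf.mp ((QuotientGroup.eq_one_iff x').mp hone)

/-- Let `f ∈ ℚ[X]` be irreducible with Galois group `G = f.Gal` acting on the
root set, `α` a root, and `{α} = Δ_0 ⊂ … ⊂ Δ_m` a maximal chain of `G`-blocks
of roots with `Δ_m = α^{G_p}` for a `p`-Sylow subgroup `G_p = P`, such that
`[Δ_{i+1} : Δ_i] = p` for all `i`. If each extension `ℚ_{Δ_i}/ℚ_{Δ_{i+1}}` is
normal — which, by the Galois correspondence, means that each stabilizer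
`G_{Δ_i}` is normal in `G_{Δ_{i+1}}` — and `p` does not divide the order of the
Galois group of the normal closure of `ℚ_{Δ_m}` over `ℚ` — which equals the
index `[G : G^{Δ_m}]` of the kernel `G^{Δ_m} = ⨅_σ Stab(σ • Δ_m)` of the
action of `G` on the block system of `Δ_m` — then `G^{Δ_m}` is a normal
`p`-Sylow subgroup of `G`. -/
theorem stmt19 (p : ℕ) (hp : p.Prime) (f : Polynomial ℚ) (hf : Irreducible f)
    (P : Subgroup f.Gal) (hPp : IsPGroup p ↥P)
    (hPmax : ∀ Q : Subgroup f.Gal, IsPGroup p ↥Q → P ≤ Q → Q = P)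
    (α : f.SplittingField) (hα : α ∈ f.rootSet f.SplittingField)
    (m : ℕ) (Δ : Fin (m + 1) → Set f.SplittingField)
    (h0 : Δ 0 = {α})
    (hroots : ∀ i, Δ i ⊆ f.rootSet f.SplittingField)
    (hblock : ∀ i, ∀ σ : f.Gal, σ • Δ i = Δ i ∨ Disjoint (σ • Δ i) (Δ i))
    (hlast : Δ (Fin.last m) = {β | ∃ σ ∈ P, σ α = β})
    (hchain : ∀ i : Fin m, Δ i.castSucc ⊂ Δ i.succ ∧
      ∀ Υ : Set f.SplittingField, Υ ⊆ f.rootSet f.SplittingField →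
        (∀ σ : f.Gal, σ • Υ = Υ ∨ Disjoint (σ • Υ) Υ) →
        ¬(Δ i.castSucc ⊂ Υ ∧ Υ ⊂ Δ i.succ))
    (hindex : ∀ i : Fin m, (Δ i.succ).ncard = p * (Δ i.castSucc).ncard)
    (hnormal : ∀ i : Fin m,
      ((MulAction.stabilizer f.Gal (Δ i.castSucc)).subgroupOf
        (MulAction.stabilizer f.Gal (Δ i.succ))).Normal)
    (hker : ¬ p ∣ (⨅ σ : f.Gal, MulAction.stabilizer f.Gal (σ • Δ (Fin.last m))).index) :
    (⨅ σ : f.Gal, MulAction.stabilizer f.Gal (σ • Δ (Fin.last m))).Normal ∧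
    IsPGroup p ↥(⨅ σ : f.Gal, MulAction.stabilizer f.Gal (σ • Δ (Fin.last m))) ∧
    ∀ Q : Subgroup f.Gal, IsPGroup p ↥Q →
      (⨅ σ : f.Gal, MulAction.stabilizer f.Gal (σ • Δ (Fin.last m))) ≤ Q →
      Q = ⨅ σ : f.Gal, MulAction.stabilizer f.Gal (σ • Δ (Fin.last m)) := by
  classical
  set K := ⨅ σ : f.Gal, MulAction.stabilizer f.Gal (σ • Δ (Fin.last m)) with hKdef
  -- basic facts
  have hsub : ∀ i : Fin m, Δ i.castSucc ⊆ Δ i.succ := fun i => (hchain i).1.subset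
  have hmem : ∀ i : Fin (m + 1), α ∈ Δ i := by
    intro i
    induction i using Fin.induction with
    | zero => rw [h0]; exact Set.mem_singleton α
    | succ j hj => exact hsub j hj
  -- descent along the chain
  have hdesc : ∀ x : f.Gal, Nat.Coprime (orderOf x) p →
      x ∈ MulAction.stabilizer f.Gal (Δ (Fin.last m)) → x α = α := by
    intro x hco hx
    have key : ∀ k : ℕ, k ≤ m → x ∈ MulAction.stabilizer f.Gal (Δ ⟨m - k, by omega⟩) := by
      intro k
      induction k with
      | zero =>
        intro _
        have : (⟨m - 0, by omega⟩ : Fin (m + 1)) = Fin.last m := by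
          ext; simp
        rwa [this]
      | succ k ih =>
        intro hk
        have prev := ih (by omega)
        set i : Fin m := ⟨m - (k + 1), by omega⟩ with hi
        have e2 : i.succ = (⟨m - k, by omega⟩ : Fin (m + 1)) := by
          ext; simp [hi]; omega
        have e1 : i.castSucc = (⟨m - (k + 1), by omega⟩ : Fin (m + 1)) := by
          ext; simp [hi]
        have hxB : x ∈ MulAction.stabilizer f.Gal (Δ i.succ) := by rwa [e2]
        have hAB : MulAction.stabilizer f.Gal (Δ i.castSucc)
            ≤ MulAction.stabilizer f.Gal (Δ i.succ) :=
          aux_stab_mono (hsub i) ⟨α, hmem i.castSucc⟩ (hblock i.succ)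
        have hidx := aux_step hf (hroots i.castSucc) (hroots i.succ)
          (hblock i.castSucc) (hblock i.succ) (hsub i) (hmem i.castSucc) (hindex i)
        have := aux_descend hAB (hnormal i) hidx hxB hco
        rwa [e1] at this
    have h00 := key m (le_refl m)
    have : (⟨m - m, by omega⟩ : Fin (m + 1)) = 0 := by ext; simp
    rw [this, h0] at h00
    have : x • ({α} : Set f.SplittingField) = {α} := h00
    rw [Set.smul_set_singleton] at this
    exact Set.singleton_eq_singleton_iff.mp this
  -- coprime-order elements of K are trivial
  have hker1 : ∀ x ∈ K, Nat.Coprime (orderOf x) p → x = 1 := by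
    intro x hxK hco
    apply Polynomial.Gal.ext
    intro β hβ
    obtain ⟨σ, hσ⟩ := gal_trans hf hα hβ
    have hx' : x ∈ MulAction.stabilizer f.Gal (σ • Δ (Fin.last m)) :=
      Subgroup.mem_iInf.mp hxK σ
    have hy : σ⁻¹ * x * σ ∈ MulAction.stabilizer f.Gal (Δ (Fin.last m)) := by
      rw [MulAction.mem_stabilizer_iff] at hx' ⊢
      have : (σ⁻¹ * x * σ) • Δ (Fin.last m) = σ⁻¹ • (x • (σ • Δ (Fin.last m))) := by
        rw [smul_smul, smul_smul, mul_assoc]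
      rw [this, hx', inv_smul_smul]
    have hyco : Nat.Coprime (orderOf (σ⁻¹ * x * σ)) p := by
      have horder : orderOf (σ⁻¹ * x * σ) = orderOf x := by
        simpa using orderOf_injective (MulAut.conj σ⁻¹).toMonoidHom
          (MulEquiv.injective _) x
      rwa [horder]
    have hfix := hdesc _ hyco hy
    have hfix' : (σ⁻¹ * x * σ) • α = α := hfix
    rw [mul_smul, mul_smul] at hfix'
    have := congrArg (fun z => σ • z) hfix'
    simp only [smul_inv_smul] at this
    calc x β = x (σ α) := by rw [hσ]
    _ = x • (σ • α) := rfl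
    _ = σ • α := this
    _ = β := hσ
  -- K is normal
  have hKnormal : K.Normal := by
    constructor
    intro x hx g
    rw [hKdef, Subgroup.mem_iInf] at hx ⊢
    intro σ
    have h1 := hx (g⁻¹ * σ)
    rw [MulAction.mem_stabilizer_iff] at h1 ⊢
    have : (g * x * g⁻¹) • σ • Δ (Fin.last m)
        = g • (x • ((g⁻¹ * σ) • Δ (Fin.last m))) := by
      rw [smul_smul, smul_smul, smul_smul]
      congr 1
    rw [this, h1, smul_smul, ← mul_assoc, mul_inv_cancel, one_mul]
  -- K is a p-group
  have hKp : IsPGroup p ↥K := by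
    rintro ⟨x, hx⟩
    have hn : orderOf x ≠ 0 := (orderOf_pos x).ne'
    set n := orderOf x with hndef
    set k := n.factorization p with hkdef
    refine ⟨k, ?_⟩
    have hy1 : x ^ (p ^ k) = 1 := by
      apply hker1 _ (pow_mem hx _)
      have hq : (x ^ (p ^ k)) ^ (n / p ^ k) = 1 := by
        rw [← pow_mul, Nat.ordProj_mul_ordCompl_eq_self n p, hndef,
          pow_orderOf_eq_one]
      have hdvd : orderOf (x ^ (p ^ k)) ∣ n / p ^ k := orderOf_dvd_of_pow_eq_one hq
      exact Nat.Coprime.coprime_dvd_left hdvd (Nat.coprime_ordCompl hp hn).symm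
    exact Subtype.ext (by simpa using hy1)
  refine ⟨hKnormal, hKp, ?_⟩
  -- maximality
  intro Q hQ hKQ
  haveI : Fact p.Prime := ⟨hp⟩
  have h1 : K.relIndex Q * Q.index = K.index := Subgroup.relIndex_mul_index hKQ
  have h2 : K.relIndex Q ∣ Nat.card ↥Q := Subgroup.index_dvd_card _
  obtain ⟨nQ, hnQ⟩ := (IsPGroup.iff_card).mp hQ
  rw [hnQ] at h2
  obtain ⟨j, hjle, hj⟩ := (Nat.dvd_prime_pow hp).mp h2
  rcases Nat.eq_zero_or_pos j with hj0 | hj1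
  · have h1' : K.relIndex Q = 1 := by rw [hj, hj0, pow_zero]
    exact le_antisymm (Subgroup.relIndex_eq_one.mp h1') hKQ
  · exfalso
    apply hker
    have hpdvd : p ∣ K.relIndex Q := by
      rw [hj]
      exact dvd_pow_self p hj1.ne'
    exact hpdvd.trans (Dvd.intro _ h1)
end
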